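/- Let g : [0,1] → [0,1] be the inverse of the strictly increasing bijection P|_{[0,1]}. Suppose f : (0,1) → ℝ is continuous and satisfies f(P(x)) = f(x) for all x ∈ (0,1). Then for every a ∈ (0,1), sup_{x∈(0,1)} f(x) = max_{x∈[P(a),a]} f(x) and inf_{x∈(0,1)} f(x) = min_{x∈[P(a),a]} f(x); in particular the supremum and infimum of f over (0,1) are attained and finite. -/
import Mathlib


/-- The cubic polynomial `P(x) = (x + 2x² + x³)/4` on the reals. -/
noncomputable def Pr : ℝ → ℝ := fun x => (x + 2 * x ^ 2 + x ^ 3) / 4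

lemma Pr_cont : Continuous Pr := by unfold Pr; continuity

lemma Pr_lt {x : ℝ} (hx : x ∈ Set.Ioo (0:ℝ) 1) : Pr x < x := by
  obtain ⟨h0, h1⟩ := hx; unfold Pr; nlinarith

lemma Pr_pos {x : ℝ} (hx : 0 < x) : 0 < Pr x := by unfold Pr; nlinarith

lemma Pr_mono {x y : ℝ} (hx : 0 ≤ x) (hxy : x < y) : Pr x < Pr y := by
  unfold Pr
  have hy : 0 ≤ y := hx.trans hxy.le
  nlinarith [mul_nonneg hx hy, sq_nonneg (x + y), mul_pos (sub_pos.mpr hxy) (sub_pos.mpr hxy)]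

lemma Pr_mono' {x y : ℝ} (hx : 0 ≤ x) (hxy : x ≤ y) : Pr x ≤ Pr y := by
  rcases eq_or_lt_of_le hxy with rfl | h
  · exact le_rfl
  · exact (Pr_mono hx h).le

lemma Pr_mem {x : ℝ} (hx : x ∈ Set.Ioo (0:ℝ) 1) : Pr x ∈ Set.Ioo (0:ℝ) 1 :=
  ⟨Pr_pos hx.1, (Pr_lt hx).trans hx.2⟩

lemma Pr_one : Pr 1 = 1 := by unfold Pr; norm_num

/-- existence of a preimage in `(0,1)` above `x` -/
lemma Pr_preimage {x : ℝ} (hx : x ∈ Set.Ioo (0:ℝ) 1) :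
    ∃ y ∈ Set.Ioo (0:ℝ) 1, Pr y = x ∧ x < y := by
  obtain ⟨h0, h1⟩ := hx
  have hiv : x ∈ Set.Icc (Pr x) (Pr 1) := by
    constructor
    · exact (Pr_lt ⟨h0, h1⟩).le
    · rw [Pr_one]; exact h1.le
  obtain ⟨y, hy, hPy⟩ := intermediate_value_Icc (le_of_lt h1) (Pr_cont.continuousOn) hiv
  refine ⟨y, ⟨lt_of_lt_of_le h0 hy.1, ?_⟩, hPy, ?_⟩
  · rcases eq_or_lt_of_le hy.2 with rfl | h
    · exfalso; rw [Pr_one] at hPy; linarith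
    · exact h
  · by_contra h
    push_neg at h
    have := Pr_mono' (le_of_lt (lt_of_lt_of_le h0 hy.1)) h
    have := Pr_lt ⟨h0, h1⟩
    linarith

/-- chosen inverse -/
noncomputable def Pg (x : ℝ) : ℝ :=
  if h : x ∈ Set.Ioo (0:ℝ) 1 then (Pr_preimage h).choose else x

lemma Pg_spec {x : ℝ} (hx : x ∈ Set.Ioo (0:ℝ) 1) :
    Pg x ∈ Set.Ioo (0:ℝ) 1 ∧ Pr (Pg x) = x ∧ x < Pg x := by
  unfold Pg
  rw [dif_pos hx]
  exact (Pr_preimage hx).choose_spec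

/-- Every point of (0,1) has a companion in [Pr a, a] with the same f-value. -/
lemma key (f : ℝ → ℝ)
    (hinv : ∀ x ∈ Set.Ioo (0 : ℝ) 1, f (Pr x) = f x)
    {a : ℝ} (ha : a ∈ Set.Ioo (0 : ℝ) 1)
    {x : ℝ} (hx : x ∈ Set.Ioo (0:ℝ) 1) :
    ∃ y ∈ Set.Icc (Pr a) a, f y = f x := by
  rcases le_or_gt (Pr a) x with hcase | hcase
  · -- forward iteration
    set s : ℕ → ℝ := fun n => Pr^[n] x with hs
    have hmem : ∀ n, s n ∈ Set.Ioo (0:ℝ) 1 := by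
      intro n; induction n with
      | zero => exact hx
      | succ n ih =>
        have : s (n+1) = Pr (s n) := Function.iterate_succ_apply' Pr n x
        rw [this]; exact Pr_mem ih
    have hsucc : ∀ n, s (n+1) = Pr (s n) := fun n =>
      Function.iterate_succ_apply' Pr n x
    have hanti : ∀ n, s (n+1) < s n := by
      intro n; rw [hsucc n]; exact Pr_lt (hmem n)
    have hfs : ∀ n, f (s n) = f x := by
      intro n; induction n with
      | zero => rfl
      | succ n ih => rw [hsucc n, hinv _ (hmem n)]; exact ih
    have hex : ∃ n, s n ≤ a := by
      by_contra h
      push_neg at h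
      have hbdd : BddBelow (Set.range s) := ⟨a, by rintro _ ⟨n, rfl⟩; exact (h n).le⟩
      have hA : Antitone s := antitone_nat_of_succ_le fun n => (hanti n).le
      have htend : Filter.Tendsto s Filter.atTop (nhds (⨅ n, s n)) :=
        tendsto_atTop_ciInf hA hbdd
      set L := ⨅ n, s n with hL
      have hLa : a ≤ L := le_ciInf fun n => (h n).le
      have hL1 : L < 1 := lt_of_le_of_lt (ciInf_le hbdd 0) (hmem 0).2
      have htend2 : Filter.Tendsto (fun n => s (n+1)) Filter.atTop (nhds L) :=
        htend.comp (Filter.tendsto_add_atTop_nat 1)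
      have htend3 : Filter.Tendsto (fun n => Pr (s n)) Filter.atTop (nhds (Pr L)) :=
        (Pr_cont.tendsto L).comp htend
      have heq : Pr L = L := by
        have : (fun n => Pr (s n)) = fun n => s (n+1) := by
          funext n; exact (hsucc n).symm
        rw [this] at htend3
        exact tendsto_nhds_unique htend3 htend2
      have : Pr L < L := Pr_lt ⟨lt_of_lt_of_le ha.1 hLa, hL1⟩
      linarith
    classical
    obtain ⟨n, hna, hminn⟩ : ∃ n, s n ≤ a ∧ ∀ m, m < n → ¬ s m ≤ a :=
      ⟨Nat.find hex, Nat.find_spec hex, fun m hm => Nat.find_min hex hm⟩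
    have hlow : Pr a ≤ s n := by
      cases n with
      | zero => exact hcase
      | succ m =>
        have hm : ¬ s m ≤ a := hminn m (Nat.lt_succ_self m)
        push_neg at hm
        rw [hsucc m]
        exact Pr_mono' ha.1.le hm.le
    exact ⟨s n, ⟨hlow, hna⟩, hfs n⟩
  · -- backward iteration
    set t : ℕ → ℝ := fun n => Pg^[n] x with ht
    have hmem : ∀ n, t n ∈ Set.Ioo (0:ℝ) 1 := by
      intro n; induction n with
      | zero => exact hx
      | succ n ih =>
        have : t (n+1) = Pg (t n) := Function.iterate_succ_apply' Pg n x
        rw [this]; exact (Pg_spec ih).1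
    have hsucc : ∀ n, t (n+1) = Pg (t n) := fun n =>
      Function.iterate_succ_apply' Pg n x
    have hPt : ∀ n, Pr (t (n+1)) = t n := by
      intro n; rw [hsucc n]; exact (Pg_spec (hmem n)).2.1
    have hmono : ∀ n, t n < t (n+1) := by
      intro n; rw [hsucc n]; exact (Pg_spec (hmem n)).2.2
    have hft : ∀ n, f (t n) = f x := by
      intro n; induction n with
      | zero => rfl
      | succ n ih =>
        have := hinv _ (hmem (n+1))
        rw [hPt n] at this
        rw [← this]; exact ih
    have hex : ∃ n, Pr a ≤ t n := by
      by_contra h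
      push_neg at h
      have hbdd : BddAbove (Set.range t) := ⟨Pr a, by rintro _ ⟨n, rfl⟩; exact (h n).le⟩
      have hM : Monotone t := monotone_nat_of_le_succ fun n => (hmono n).le
      have htend : Filter.Tendsto t Filter.atTop (nhds (⨆ n, t n)) :=
        tendsto_atTop_ciSup hM hbdd
      set L := ⨆ n, t n with hL
      have hL0 : 0 < L := lt_of_lt_of_le (hmem 0).1 (le_ciSup hbdd 0)
      have hL1 : L < 1 := lt_of_le_of_lt (ciSup_le fun n => (h n).le)
        ((Pr_lt ha).trans ha.2)
      have htend2 : Filter.Tendsto (fun n => t (n+1)) Filter.atTop (nhds L) :=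
        htend.comp (Filter.tendsto_add_atTop_nat 1)
      have htend3 : Filter.Tendsto (fun n => Pr (t (n+1))) Filter.atTop (nhds (Pr L)) :=
        (Pr_cont.tendsto L).comp htend2
      have heq : Pr L = L := by
        have : (fun n => Pr (t (n+1))) = fun n => t n := by
          funext n; exact hPt n
        rw [this] at htend3
        exact tendsto_nhds_unique htend3 htend
      have : Pr L < L := Pr_lt ⟨hL0, hL1⟩
      linarith
    classical
    obtain ⟨n, hna, hminn⟩ : ∃ n, Pr a ≤ t n ∧ ∀ m, m < n → ¬ Pr a ≤ t m :=
      ⟨Nat.find hex, Nat.find_spec hex, fun m hm => Nat.find_min hex hm⟩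
    have hn0 : n ≠ 0 := by
      intro h0
      rw [h0] at hna
      exact absurd hna (not_le.mpr hcase)
    obtain ⟨m, rfl⟩ : ∃ m, n = m + 1 := ⟨n - 1, by omega⟩
    have hm : ¬ Pr a ≤ t m := hminn m (Nat.lt_succ_self m)
    push_neg at hm
    have hup : t (m+1) ≤ a := by
      by_contra h
      push_neg at h
      have := Pr_mono' ha.1.le h.le
      rw [hPt m] at this
      linarith
    exact ⟨t (m+1), ⟨hna, hup⟩, hft (m+1)⟩

/-- if `f : (0,1) → ℝ` is continuous and satisfies `f(P(x)) = f(x)`, then for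
every `a ∈ (0,1)` the supremum and infimum of `f` over `(0,1)` are attained on the compact
interval `[P(a), a]`: there are points of `[P(a), a]` where `f` attains its global maximum
and minimum over `(0,1)`. -/
theorem stmt11 (f : ℝ → ℝ) (hf : ContinuousOn f (Set.Ioo 0 1))
    (hinv : ∀ x ∈ Set.Ioo (0 : ℝ) 1, f (Pr x) = f x)
    (a : ℝ) (ha : a ∈ Set.Ioo (0 : ℝ) 1) :
    (∃ xmax ∈ Set.Icc (Pr a) a, ∀ x ∈ Set.Ioo (0 : ℝ) 1, f x ≤ f xmax) ∧
    (∃ xmin ∈ Set.Icc (Pr a) a, ∀ x ∈ Set.Ioo (0 : ℝ) 1, f xmin ≤ f x) := by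
  have hsub : Set.Icc (Pr a) a ⊆ Set.Ioo (0:ℝ) 1 := fun y hy =>
    ⟨lt_of_lt_of_le (Pr_pos ha.1) hy.1, lt_of_le_of_lt hy.2 ha.2⟩
  have hne : (Set.Icc (Pr a) a).Nonempty := Set.nonempty_Icc.mpr (Pr_lt ha).le
  have hfc : ContinuousOn f (Set.Icc (Pr a) a) := hf.mono hsub
  obtain ⟨xmax, hxmax, hmax⟩ := isCompact_Icc.exists_isMaxOn hne hfc
  obtain ⟨xmin, hxmin, hmin⟩ := isCompact_Icc.exists_isMinOn hne hfc
  constructor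
  · refine ⟨xmax, hxmax, fun x hx => ?_⟩
    obtain ⟨y, hy, hfy⟩ := key f hinv ha hx
    rw [← hfy]; exact hmax hy
  · refine ⟨xmin, hxmin, fun x hx => ?_⟩
    obtain ⟨y, hy, hfy⟩ := key f hinv ha hx
    rw [← hfy]; exact hmin hy
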